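/- Conversely, suppose {ℚ_n}_{n≥0} is any sequence of column vectors of polynomials such that for each n every entry of ℚ_n − ℙ_n lies in Π_{n−1}^d and every entry of ℚ_n is ⟨·,·⟩_ν-orthogonal to Π_{n−1}^d. Then necessarily ℚ_0 = ℙ_0 and, for every n ≥ 1, ℚ_n(x) = ℙ_n(x) − 𝖯_n(ξ) (I_N + Λ 𝐊_{n−1})^{−1} Λ 𝕂_{n−1}(ξ, x) for all x ∈ ℝ^d. -/
import Mathlib


open MeasureTheory MvPolynomial Matrix Finset

noncomputable section

/-- The space `Π_{n-1}^d` of real polynomials in `d` variables of total degree `< n`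
(interpreted as the zero space for `n = 0`). -/
def piDegLT (d : ℕ) : ℕ → Submodule ℝ (MvPolynomial (Fin d) ℝ)
  | 0 => ⊥
  | n + 1 => MvPolynomial.restrictTotalDegree (Fin d) ℝ n

/-- The inner product `⟨p, q⟩_μ = ∫ p q dμ`. -/
def muInner {d : ℕ} (μ : Measure (Fin d → ℝ)) (p q : MvPolynomial (Fin d) ℝ) : ℝ :=
  ∫ x, eval x p * eval x q ∂μ

/-- The inner product `⟨p, q⟩_ν = ⟨p, q⟩_μ + 𝐩(ξ)^T Λ 𝐪(ξ)`. -/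
def nuInner {d N : ℕ} (μ : Measure (Fin d → ℝ)) (ξ : Fin N → (Fin d → ℝ))
    (Λ : Matrix (Fin N) (Fin N) ℝ) (p q : MvPolynomial (Fin d) ℝ) : ℝ :=
  muInner μ p q + (fun i => eval (ξ i) p) ⬝ᵥ Λ.mulVec (fun i => eval (ξ i) q)

/-- The reproducing kernel `K_n(dμ; x, y) = Σ_{j=0}^n ℙ_j(x)^T ℙ_j(y)` of `Π_n^d`. -/
def Kmu {d : ℕ} (r : ℕ → ℕ) (P : (n : ℕ) → Fin (r n) → MvPolynomial (Fin d) ℝ)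
    (n : ℕ) (x y : Fin d → ℝ) : ℝ :=
  ∑ j ∈ Finset.range (n + 1), ∑ k : Fin (r j), eval x (P j k) * eval y (P j k)

/-- The matrix `𝐊_n = (K_n(dμ; ξ_i, ξ_j))_{i,j=1}^N`. -/
def bigK {d N : ℕ} (r : ℕ → ℕ) (P : (n : ℕ) → Fin (r n) → MvPolynomial (Fin d) ℝ)
    (ξ : Fin N → (Fin d → ℝ)) (n : ℕ) : Matrix (Fin N) (Fin N) ℝ :=
  Matrix.of fun i j => Kmu r P n (ξ i) (ξ j)

/-- The matrix `𝖯_n(ξ)` with columns `ℙ_n(ξ_1), …, ℙ_n(ξ_N)`. -/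
def Pmat {d N : ℕ} (r : ℕ → ℕ) (P : (n : ℕ) → Fin (r n) → MvPolynomial (Fin d) ℝ)
    (ξ : Fin N → (Fin d → ℝ)) (n : ℕ) : Matrix (Fin (r n)) (Fin N) ℝ :=
  Matrix.of fun k i => eval (ξ i) (P n k)

private lemma muInner_comm' {d : ℕ} (μ : Measure (Fin d → ℝ))
    (p q : MvPolynomial (Fin d) ℝ) : muInner μ p q = muInner μ q p := by
  unfold muInner; simp_rw [mul_comm]

private lemma muInner_add_left' {d : ℕ} {μ : Measure (Fin d → ℝ)}
    (hint : ∀ p q : MvPolynomial (Fin d) ℝ,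
      Integrable (fun x => eval x p * eval x q) μ)
    (p p' q : MvPolynomial (Fin d) ℝ) :
    muInner μ (p + p') q = muInner μ p q + muInner μ p' q := by
  unfold muInner
  simp_rw [map_add, add_mul]
  exact integral_add (hint p q) (hint p' q)

private lemma muInner_sub_left' {d : ℕ} {μ : Measure (Fin d → ℝ)}
    (hint : ∀ p q : MvPolynomial (Fin d) ℝ,
      Integrable (fun x => eval x p * eval x q) μ)
    (p p' q : MvPolynomial (Fin d) ℝ) :
    muInner μ (p - p') q = muInner μ p q - muInner μ p' q := by
  unfold muInner
  simp_rw [map_sub, sub_mul]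
  exact integral_sub (hint p q) (hint p' q)

private lemma muInner_smul_left' {d : ℕ} (μ : Measure (Fin d → ℝ))
    (c : ℝ) (p q : MvPolynomial (Fin d) ℝ) :
    muInner μ (c • p) q = c * muInner μ p q := by
  unfold muInner
  simp_rw [MvPolynomial.smul_eval, mul_assoc]
  exact integral_const_mul c _

private lemma muInner_zero_left' {d : ℕ} (μ : Measure (Fin d → ℝ))
    (q : MvPolynomial (Fin d) ℝ) : muInner μ 0 q = 0 := by
  unfold muInner
  simp

/-- **converse.** If `{ℚ_n}` is any sequence of column vectors of
polynomials such that every entry of `ℚ_n − ℙ_n` lies in `Π_{n-1}^d` and every entry of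
`ℚ_n` is `⟨·,·⟩_ν`-orthogonal to `Π_{n-1}^d`, then `ℚ_0 = ℙ_0` and for every `n ≥ 1`,
`ℚ_n(x) = ℙ_n(x) − 𝖯_n(ξ) (I_N + Λ 𝐊_{n−1})^{−1} Λ 𝕂_{n−1}(ξ, x)` for all `x`. -/
theorem orthogonal_system_eq_Qpoly
    {d N : ℕ} (hd : 1 ≤ d) (hN : 1 ≤ N)
    (μ : Measure (Fin d → ℝ))
    (hint : ∀ p q : MvPolynomial (Fin d) ℝ,
      Integrable (fun x => eval x p * eval x q) μ)
    (hpos : ∀ p : MvPolynomial (Fin d) ℝ, p ≠ 0 → 0 < ∫ x, (eval x p) ^ 2 ∂μ)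
    (r : ℕ → ℕ) (hr : ∀ n, r n = Nat.choose (n + d - 1) n)
    (P : (n : ℕ) → Fin (r n) → MvPolynomial (Fin d) ℝ)
    (hdeg : ∀ n k, P n k ∈ MvPolynomial.restrictTotalDegree (Fin d) ℝ n)
    (horth : ∀ n k, ∀ q ∈ piDegLT d n, muInner μ (P n k) q = 0)
    (honb : ∀ n (k l : Fin (r n)), muInner μ (P n k) (P n l) = if k = l then 1 else 0)
    (hspan : ∀ n, MvPolynomial.restrictTotalDegree (Fin d) ℝ n ≤
      Submodule.span ℝ {p | ∃ j, j ≤ n ∧ ∃ k, p = P j k})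
    (ξ : Fin N → (Fin d → ℝ)) (hξ : Function.Injective ξ)
    (Λ : Matrix (Fin N) (Fin N) ℝ) (hΛ : Λ.PosDef)
    (Q : (n : ℕ) → Fin (r n) → MvPolynomial (Fin d) ℝ)
    (hQdiff : ∀ n k, Q n k - P n k ∈ piDegLT d n)
    (hQorth : ∀ n k, ∀ q ∈ piDegLT d n, nuInner μ ξ Λ (Q n k) q = 0) :
    (∀ k, Q 0 k = P 0 k) ∧
    ∀ n, 1 ≤ n → ∀ (k : Fin (r n)) (x : Fin d → ℝ),
      eval x (Q n k) = eval x (P n k) -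
        ∑ i : Fin N,
          ((Pmat r P ξ n * (1 + Λ * bigK r P ξ (n - 1))⁻¹ * Λ) k i) *
            Kmu r P (n - 1) (ξ i) x := by
  have hΛsymm : ∀ i j, Λ i j = Λ j i := by
    intro i j
    simpa using (hΛ.isHermitian.apply i j).symm
  have hKsymm : ∀ n x y, Kmu r P n x y = Kmu r P n y x := by
    intro n x y
    unfold Kmu
    exact Finset.sum_congr rfl fun j _ => Finset.sum_congr rfl fun l _ => mul_comm _ _
  -- membership lemma
  have hmemLT : ∀ {j j' : ℕ}, j < j' → ∀ l, P j l ∈ piDegLT d j' := by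
    intro j j' hjj' l
    obtain ⟨t, rfl⟩ : ∃ t, j' = t + 1 :=
      ⟨j' - 1, (Nat.succ_pred_eq_of_pos (Nat.pos_of_ne_zero (by omega))).symm⟩
    show P j l ∈ MvPolynomial.restrictTotalDegree (Fin d) ℝ t
    rw [MvPolynomial.mem_restrictTotalDegree]
    exact le_trans ((MvPolynomial.mem_restrictTotalDegree _ _ _).mp (hdeg j l)) (by omega)
  have hPP : ∀ j j' (l : Fin (r j)) (l' : Fin (r j')), j ≠ j' →
      muInner μ (P j l) (P j' l') = 0 := by
    intro j j' l l' hne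
    rcases lt_or_gt_of_ne hne with h | h
    · rw [muInner_comm']; exact horth j' l' _ (hmemLT h l)
    · exact horth j l _ (hmemLT h l')
  constructor
  · intro k
    have h := hQdiff 0 k
    have h0 : piDegLT d 0 = ⊥ := rfl
    rw [h0, Submodule.mem_bot, sub_eq_zero] at h
    exact h
  intro n hn k x
  obtain ⟨m, rfl⟩ : ∃ m, n = m + 1 := ⟨n - 1, (Nat.succ_pred_eq_of_pos hn).symm⟩
  simp only [Nat.add_sub_cancel]
  -- the expansion lemma
  have expand : ∀ S ∈ MvPolynomial.restrictTotalDegree (Fin d) ℝ m,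
      S = ∑ j ∈ Finset.range (m + 1), ∑ l : Fin (r j), (muInner μ S (P j l)) • P j l := by
    intro S hS
    have hS' := hspan m hS
    clear hS
    induction hS' using Submodule.span_induction with
    | mem p hp =>
        obtain ⟨j0, hj0, l0, rfl⟩ := hp
        rw [Finset.sum_eq_single j0]
        · simp [honb, ite_smul]
        · intro b _ hb
          refine Finset.sum_eq_zero fun l _ => ?_
          rw [hPP j0 b l0 l (Ne.symm hb), zero_smul]
        · intro h
          exact absurd (Finset.mem_range.mpr (Nat.lt_succ_of_le hj0)) h
    | zero => simp [muInner_zero_left']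
    | add x y hx hy ihx ihy =>
        conv_lhs => rw [ihx, ihy]
        simp_rw [muInner_add_left' hint, add_smul, Finset.sum_add_distrib]
    | smul a x hx ih =>
        conv_lhs => rw [ih]
        simp_rw [muInner_smul_left', mul_smul, Finset.smul_sum]
  -- the basic objects
  set Qv : Fin N → ℝ := fun i => eval (ξ i) (Q (m + 1) k) with hQv
  set pv : Fin N → ℝ := fun i => eval (ξ i) (P (m + 1) k) with hpv
  set R : MvPolynomial (Fin d) ℝ := Q (m + 1) k - P (m + 1) k with hRdef
  have hR : R ∈ MvPolynomial.restrictTotalDegree (Fin d) ℝ m := hQdiff (m + 1) k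
  -- the value of ⟨R, q⟩_μ
  have hval : ∀ q ∈ MvPolynomial.restrictTotalDegree (Fin d) ℝ m,
      muInner μ R q = -(Qv ⬝ᵥ Λ.mulVec fun i => eval (ξ i) q) := by
    intro q hq
    have h1 := hQorth (m + 1) k q hq
    have h2 := horth (m + 1) k q hq
    have h3 : muInner μ R q
        = muInner μ (Q (m + 1) k) q - muInner μ (P (m + 1) k) q :=
      muInner_sub_left' hint _ _ _
    unfold nuInner at h1
    rw [h3, h2, sub_zero]
    linarith [h1]
  -- the key pointwise identity
  have keyR : ∀ y, eval y R = -∑ i, (Λ.mulVec Qv) i * Kmu r P m (ξ i) y := by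
    intro y
    have hRe := expand R hR
    have step1 : eval y R = ∑ j ∈ Finset.range (m + 1), ∑ l : Fin (r j),
        muInner μ R (P j l) * eval y (P j l) := by
      conv_lhs => rw [hRe]
      rw [map_sum]
      refine Finset.sum_congr rfl fun j _ => ?_
      rw [map_sum]
      exact Finset.sum_congr rfl fun l _ => MvPolynomial.smul_eval _ _ _
    rw [step1]
    have step2 : ∀ j ∈ Finset.range (m + 1), ∀ l : Fin (r j),
        muInner μ R (P j l) = -(Qv ⬝ᵥ Λ.mulVec fun i => eval (ξ i) (P j l)) := by
      intro j hj l
      refine hval (P j l) ?_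
      rw [MvPolynomial.mem_restrictTotalDegree]
      exact le_trans ((MvPolynomial.mem_restrictTotalDegree _ _ _).mp (hdeg j l))
        (Nat.lt_succ_iff.mp (Finset.mem_range.mp hj))
    calc ∑ j ∈ Finset.range (m + 1), ∑ l : Fin (r j),
          muInner μ R (P j l) * eval y (P j l)
        = -∑ j ∈ Finset.range (m + 1), ∑ l : Fin (r j),
            (Qv ⬝ᵥ Λ.mulVec fun i => eval (ξ i) (P j l)) * eval y (P j l) := by
          rw [← Finset.sum_neg_distrib]
          refine Finset.sum_congr rfl fun j hj => ?_
          rw [← Finset.sum_neg_distrib]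
          refine Finset.sum_congr rfl fun l _ => ?_
          rw [step2 j hj l, neg_mul]
      _ = -∑ i, (Λ.mulVec Qv) i * Kmu r P m (ξ i) y := by
          congr 1
          calc ∑ j ∈ Finset.range (m + 1), ∑ l : Fin (r j),
                (Qv ⬝ᵥ Λ.mulVec fun i => eval (ξ i) (P j l)) * eval y (P j l)
              = ∑ j ∈ Finset.range (m + 1), ∑ l : Fin (r j), ∑ i : Fin N, ∑ i' : Fin N,
                  Qv i * (Λ i i' * eval (ξ i') (P j l)) * eval y (P j l) := by
                refine Finset.sum_congr rfl fun j _ => Finset.sum_congr rfl fun l _ => ?_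
                simp [dotProduct, Matrix.mulVec, Finset.sum_mul, Finset.mul_sum]
            _ = ∑ j ∈ Finset.range (m + 1), ∑ l : Fin (r j), ∑ i : Fin N, ∑ i' : Fin N,
                  Λ i i' * Qv i' * (eval (ξ i) (P j l) * eval y (P j l)) := by
                refine Finset.sum_congr rfl fun j _ => Finset.sum_congr rfl fun l _ => ?_
                rw [Finset.sum_comm]
                refine Finset.sum_congr rfl fun a _ => Finset.sum_congr rfl fun b _ => ?_
                rw [hΛsymm b a]
                ring
            _ = ∑ j ∈ Finset.range (m + 1), ∑ i : Fin N, ∑ l : Fin (r j), ∑ i' : Fin N,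
                  Λ i i' * Qv i' * (eval (ξ i) (P j l) * eval y (P j l)) := by
                exact Finset.sum_congr rfl fun j _ => Finset.sum_comm
            _ = ∑ i : Fin N, ∑ j ∈ Finset.range (m + 1), ∑ l : Fin (r j), ∑ i' : Fin N,
                  Λ i i' * Qv i' * (eval (ξ i) (P j l) * eval y (P j l)) := by
                exact Finset.sum_comm
            _ = ∑ i : Fin N, ∑ j ∈ Finset.range (m + 1), ∑ i' : Fin N, ∑ l : Fin (r j),
                  Λ i i' * Qv i' * (eval (ξ i) (P j l) * eval y (P j l)) := by
                exact Finset.sum_congr rfl fun i _ =>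
                  Finset.sum_congr rfl fun j _ => Finset.sum_comm
            _ = ∑ i : Fin N, ∑ i' : Fin N, ∑ j ∈ Finset.range (m + 1), ∑ l : Fin (r j),
                  Λ i i' * Qv i' * (eval (ξ i) (P j l) * eval y (P j l)) := by
                exact Finset.sum_congr rfl fun i _ => Finset.sum_comm
            _ = ∑ i, (Λ.mulVec Qv) i * Kmu r P m (ξ i) y := by
                refine Finset.sum_congr rfl fun i _ => ?_
                unfold Kmu Matrix.mulVec dotProduct
                rw [Finset.sum_mul]
                refine Finset.sum_congr rfl fun i' _ => ?_
                rw [Finset.mul_sum]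
                refine Finset.sum_congr rfl fun j _ => ?_
                rw [Finset.mul_sum]
  -- the linear system
  have hvec : (1 + bigK r P ξ m * Λ).mulVec Qv = pv := by
    funext a
    have h := keyR (ξ a)
    have hev : eval (ξ a) R = Qv a - pv a := by
      rw [hRdef, map_sub]
    rw [hev] at h
    have hKv : ((bigK r P ξ m * Λ).mulVec Qv) a
        = ∑ i, (Λ.mulVec Qv) i * Kmu r P m (ξ i) (ξ a) := by
      rw [← Matrix.mulVec_mulVec]
      unfold Matrix.mulVec dotProduct bigK
      simp only [Matrix.of_apply]
      exact Finset.sum_congr rfl fun i _ => by rw [hKsymm m (ξ a) (ξ i)]; ring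
    have : ((1 + bigK r P ξ m * Λ).mulVec Qv) a
        = Qv a + ((bigK r P ξ m * Λ).mulVec Qv) a := by
      rw [Matrix.add_mulVec, Matrix.one_mulVec]
      rfl
    rw [this, hKv]
    linarith [h]
  -- positive semidefiniteness of bigK
  have hKps : (bigK r P ξ m).PosSemidef := by
    have hfac : bigK r P ξ m
        = (Matrix.of fun (jl : Σ j : Fin (m + 1), Fin (r (j : ℕ))) i =>
            eval (ξ i) (P (jl.1 : ℕ) jl.2))ᴴ *
          (Matrix.of fun (jl : Σ j : Fin (m + 1), Fin (r (j : ℕ))) i =>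
            eval (ξ i) (P (jl.1 : ℕ) jl.2)) := by
      ext i i'
      simp only [Matrix.mul_apply, Matrix.conjTranspose_apply, Matrix.of_apply, star_trivial,
        bigK, Kmu]
      rw [← Fin.sum_univ_eq_sum_range (fun j => ∑ l : Fin (r j),
        eval (ξ i) (P j l) * eval (ξ i') (P j l)) (m + 1)]
      rw [← Finset.univ_sigma_univ, Finset.sum_sigma]
    rw [hfac]
    exact Matrix.posSemidef_conjTranspose_mul_self _
  have hΛdet : IsUnit Λ.det := hΛ.det_pos.ne'.isUnit
  have hPD : (Λ⁻¹ + bigK r P ξ m).PosDef := hΛ.inv.add_posSemidef hKps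
  have hfac1 : 1 + bigK r P ξ m * Λ = (Λ⁻¹ + bigK r P ξ m) * Λ := by
    rw [Matrix.add_mul, Matrix.nonsing_inv_mul Λ hΛdet]
  have hfac2 : 1 + Λ * bigK r P ξ m = Λ * (Λ⁻¹ + bigK r P ξ m) := by
    rw [Matrix.mul_add, Matrix.mul_nonsing_inv Λ hΛdet]
  have hdet1 : IsUnit (1 + bigK r P ξ m * Λ).det := by
    rw [hfac1, Matrix.det_mul]
    exact (((Matrix.isUnit_iff_isUnit_det _).mp hPD.isUnit).mul hΛdet)
  have hdet2 : IsUnit (1 + Λ * bigK r P ξ m).det := by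
    rw [hfac2, Matrix.det_mul]
    exact (hΛdet.mul ((Matrix.isUnit_iff_isUnit_det _).mp hPD.isUnit))
  have hQvEq : Qv = (1 + bigK r P ξ m * Λ)⁻¹.mulVec pv := by
    rw [← hvec, Matrix.mulVec_mulVec, Matrix.nonsing_inv_mul _ hdet1, Matrix.one_mulVec]
  -- transposes
  have hΛT : Λᵀ = Λ := by
    ext i j
    exact hΛsymm j i
  have hKT : (bigK r P ξ m)ᵀ = bigK r P ξ m := by
    ext i j
    exact hKsymm m (ξ j) (ξ i)
  have hBT : ((1 + Λ * bigK r P ξ m)⁻¹)ᵀ = (1 + bigK r P ξ m * Λ)⁻¹ := by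
    rw [Matrix.transpose_nonsing_inv, Matrix.transpose_add, Matrix.transpose_one,
      Matrix.transpose_mul, hΛT, hKT]
  -- final coefficient identity
  have hfin : ∀ i, (Pmat r P ξ (m + 1) * (1 + Λ * bigK r P ξ m)⁻¹ * Λ) k i
      = (Λ.mulVec Qv) i := by
    intro i
    rw [hQvEq, Matrix.mulVec_mulVec, Matrix.mul_assoc]
    simp only [Matrix.mul_apply, Matrix.mulVec, dotProduct, Pmat, Matrix.of_apply]
    simp only [Finset.mul_sum, Finset.sum_mul]
    refine Finset.sum_congr rfl fun a _ => Finset.sum_congr rfl fun b _ => ?_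
    have hB : (1 + bigK r P ξ m * Λ)⁻¹ b a = (1 + Λ * bigK r P ξ m)⁻¹ a b := by
      rw [← hBT]; rfl
    rw [hB, hΛsymm i b]
    ring
  -- conclude
  have hfinal := keyR x
  have hev : eval x R = eval x (Q (m + 1) k) - eval x (P (m + 1) k) := by
    rw [hRdef, map_sub]
  rw [hev] at hfinal
  have : ∑ i : Fin N, (Pmat r P ξ (m + 1) * (1 + Λ * bigK r P ξ m)⁻¹ * Λ) k i *
      Kmu r P m (ξ i) x = ∑ i, (Λ.mulVec Qv) i * Kmu r P m (ξ i) x :=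
    Finset.sum_congr rfl fun i _ => by rw [hfin i]
  rw [this]
  linarith [hfinal]
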